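/- Let Ψ be a p×p real positive definite diagonal matrix, S a p×p real symmetric matrix, and G = Ψ^{-1/2} S Ψ^{-1/2}. Suppose G = V·diag(θ)·Vᵀ with V orthogonal and θ : Fin p → ℝ monotonically decreasing. Fix q < p, let V₁ be the first q columns of V, Δ = diag(√(max(θ_j − 1, 0))), and Λ̂ = Ψ^{1/2} V₁ Δ. Then tr((Λ̂Λ̂ᵀ + Ψ)⁻¹ S) = tr(Ψ⁻¹ S) − Σ_{j=1}^{q} max(θ_j − 1, 0). -/

import Mathlib

/-!
Conjugating by `Ψ^{1/2}` and `V`, both `Ψ` and `Λ̂Λ̂ᵀ + Ψ` become `Ψ^{1/2} V diag(c) Vᵀ Ψ^{1/2}`,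
with `c = 1` and `c = 1 + d` respectively, where `d_j = max(θ_j - 1, 0)` for `j < q` and `d_j = 0`
otherwise. By cyclicity of the trace, `tr((Ψ^{1/2} V diag(c) Vᵀ Ψ^{1/2})⁻¹ S) = ∑ θ_j / c_j`, and
`θ - θ / (1 + max(θ - 1, 0)) = max(θ - 1, 0)`.
-/

open Matrix

theorem Fintype.sum_extend_zero {ι κ M : Type*} [Fintype ι] [Fintype κ] [AddCommMonoid M]
    {e : ι → κ} (he : Function.Injective e) (w : ι → M) :
    ∑ k, Function.extend e w 0 k = ∑ i, w i :=
  (Fintype.sum_of_injective e he w _ (fun k hk => Function.extend_apply' (f := e) w 0 k hk)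
    (fun i => (he.extend_apply w 0 i).symm)).symm

theorem Function.extend_zero_eq_zero_or {ι κ M : Type*} [Zero M] {e : ι → κ}
    (he : Function.Injective e) {w : ι → M} {f : κ → M} (hw : ∀ i, w i = f (e i)) (k : κ) :
    Function.extend e w 0 k = 0 ∨ Function.extend e w 0 k = f k := by
  rcases em (∃ i, e i = k) with ⟨i, rfl⟩ | hk
  · exact .inr ((he.extend_apply w 0 i).trans (hw i))
  · exact .inl (Function.extend_apply' w (0 : κ → M) k hk)

theorem sub_div_max_sub_one_add_one {K : Type*} [Field K] [LinearOrder K] [IsStrictOrderedRing K]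
    (x : K) : x - x / (max (x - 1) 0 + 1) = max (x - 1) 0 := by
  rcases le_total x 1 with hx | hx
  · rw [max_eq_right (by linarith)]; simp
  · rw [max_eq_left (by linarith), sub_add_cancel, div_self (by linarith)]

namespace Matrix

variable {n R : Type*} [Fintype n] [DecidableEq n] [CommRing R]

theorem trace_inv_conj_mul (A B S : Matrix n n R) :
    ((A * B * A)⁻¹ * S).trace = (B⁻¹ * (A⁻¹ * S * A⁻¹)).trace := by
  rw [mul_inv_rev, mul_inv_rev, Matrix.mul_assoc, Matrix.mul_assoc, trace_mul_comm,
    Matrix.mul_assoc, Matrix.mul_assoc]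

theorem submatrix_mul_diagonal_mul_transpose {m : Type*} [Fintype m] [DecidableEq m]
    (V : Matrix n n R) (e : m ↪ n) (w : m → R) :
    V.submatrix id e * diagonal w * (V.submatrix id e)ᵀ
      = V * diagonal (Function.extend e w 0) * Vᵀ := by
  ext i k
  rw [mul_apply, mul_apply]
  simp only [mul_diagonal, transpose_apply, submatrix_apply, id]
  refine Fintype.sum_of_injective e e.injective _ _ (fun l hl => ?_) (fun j => ?_)
  · rw [Function.extend_apply' _ _ _ hl, Pi.zero_apply, mul_zero, zero_mul]
  · rw [e.injective.extend_apply]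

theorem mul_transpose_add_mul_self_eq_conj_diagonal {m : Type*} [Fintype m] [DecidableEq m]
    {A V : Matrix n n R} (hA : Aᵀ = A) (hV : Vᵀ * V = 1) (e : m ↪ n)
    {D : Matrix m m R} {w : m → R} (hD : D * Dᵀ = diagonal w) :
    A * V.submatrix id e * D * (A * V.submatrix id e * D)ᵀ + A * A
      = A * (V * diagonal (fun i => Function.extend e w 0 i + 1) * Vᵀ) * A := by
  have hVVt : V * Vᵀ = 1 := mul_eq_one_comm.mp hV
  rw [show diagonal (fun i => Function.extend e w 0 i + 1)
      = diagonal (Function.extend e w 0) + 1 from (diagonal_add _ 1).symm,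
    Matrix.mul_add, Matrix.mul_one, Matrix.add_mul, hVVt, Matrix.mul_add, Matrix.mul_one,
    Matrix.add_mul, ← submatrix_mul_diagonal_mul_transpose, ← hD]
  simp only [transpose_mul, hA, Matrix.mul_assoc]

variable {K : Type*} [Field K] {V : Matrix n n K}

theorem inv_conj_diagonal (hV : Vᵀ * V = 1) {c : n → K} (hc : ∀ i, c i ≠ 0) :
    (V * diagonal c * Vᵀ)⁻¹ = V * diagonal c⁻¹ * Vᵀ := by
  refine inv_eq_left_inv ?_
  calc V * diagonal c⁻¹ * Vᵀ * (V * diagonal c * Vᵀ)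
      = V * (diagonal c⁻¹ * (Vᵀ * V) * diagonal c) * Vᵀ := by simp only [Matrix.mul_assoc]
    _ = 1 := by
      rw [hV, Matrix.mul_one, diagonal_mul_diagonal,
        show (fun i => c⁻¹ i * c i) = fun _ => 1 from funext fun i => inv_mul_cancel₀ (hc i),
        diagonal_one, Matrix.mul_one, mul_eq_one_comm.mp hV]

theorem trace_conj_diagonal_mul_conj_diagonal (hV : Vᵀ * V = 1) (a b : n → K) :
    (V * diagonal a * Vᵀ * (V * diagonal b * Vᵀ)).trace = ∑ i, a i * b i := by
  calc (V * diagonal a * Vᵀ * (V * diagonal b * Vᵀ)).trace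
      = (V * (diagonal a * (Vᵀ * V) * diagonal b) * Vᵀ).trace := by simp only [Matrix.mul_assoc]
    _ = (Vᵀ * V * (diagonal a * diagonal b)).trace := by rw [trace_mul_cycle, hV, Matrix.mul_one]
    _ = ∑ i, a i * b i := by rw [hV, Matrix.one_mul, diagonal_mul_diagonal, trace_diagonal]

theorem trace_inv_conj_conj_diagonal_mul (hV : Vᵀ * V = 1) {c : n → K} (hc : ∀ i, c i ≠ 0)
    {A S : Matrix n n K} {θ : n → K} (hS : A⁻¹ * S * A⁻¹ = V * diagonal θ * Vᵀ) :
    ((A * (V * diagonal c * Vᵀ) * A)⁻¹ * S).trace = ∑ i, θ i / c i := by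
  rw [trace_inv_conj_mul, hS, inv_conj_diagonal hV hc, trace_conj_diagonal_mul_conj_diagonal hV]
  simp only [Pi.inv_apply, div_eq_inv_mul]

end Matrix

theorem optimized_covariance_trace_general {p q : ℕ} (hq : q < p)
    (Ψ Ψh S : Matrix (Fin p) (Fin p) ℝ)
    (hΨh : Ψh.PosDef) (hΨhsq : Ψh * Ψh = Ψ)
    (G : Matrix (Fin p) (Fin p) ℝ) (hG : G = Ψh⁻¹ * S * Ψh⁻¹)
    (V : Matrix (Fin p) (Fin p) ℝ) (hV : V ∈ Matrix.orthogonalGroup (Fin p) ℝ)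
    (θ : Fin p → ℝ)
    (hGeig : G = V * Matrix.diagonal θ * Vᵀ)
    (V₁ : Matrix (Fin p) (Fin q) ℝ)
    (hV₁ : V₁ = Matrix.of fun i j => V i (Fin.castLE hq.le j))
    (Δ : Matrix (Fin q) (Fin q) ℝ)
    (hΔ : Δ = Matrix.diagonal fun j => Real.sqrt (max (θ (Fin.castLE hq.le j) - 1) 0))
    (Λhat : Matrix (Fin p) (Fin q) ℝ) (hΛhat : Λhat = Ψh * V₁ * Δ) :
    ((Λhat * Λhatᵀ + Ψ)⁻¹ * S).trace
      = (Ψ⁻¹ * S).trace - ∑ j : Fin q, max (θ (Fin.castLE hq.le j) - 1) 0 := by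
  set e := Fin.castLEEmb hq.le
  set w : Fin q → ℝ := fun j => max (θ (e j) - 1) 0
  set d := Function.extend e w 0
  have hVV : Vᵀ * V = 1 := by
    simpa [star_eq_conjTranspose] using (mem_orthogonalGroup_iff' _ _).mp hV
  have hΨht : Ψhᵀ = Ψh := by
    simpa [conjTranspose_eq_transpose_of_trivial] using hΨh.isHermitian.eq
  have hΔΔ : Δ * Δᵀ = diagonal w := by
    rw [hΔ, diagonal_transpose, diagonal_mul_diagonal]
    exact congrArg diagonal (funext fun j => Real.mul_self_sqrt (le_max_right _ _))
  have hΛΨ : Λhat * Λhatᵀ + Ψ = Ψh * (V * diagonal (fun i => d i + 1) * Vᵀ) * Ψh := by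
    rw [← mul_transpose_add_mul_self_eq_conj_diagonal hΨht hVV e hΔΔ, hΛhat, hV₁, hΨhsq]
    rfl
  have hΨ_conj : Ψ = Ψh * (V * diagonal 1 * Vᵀ) * Ψh := by
    rw [show diagonal (1 : Fin p → ℝ) = 1 from diagonal_one, Matrix.mul_one,
      mul_eq_one_comm.mp hVV, Matrix.mul_one, hΨhsq]
  have hGV : Ψh⁻¹ * S * Ψh⁻¹ = V * diagonal θ * Vᵀ := hG ▸ hGeig
  have hd : ∀ i, d i = 0 ∨ d i = max (θ i - 1) 0 :=
    Function.extend_zero_eq_zero_or e.injective fun _ => rfl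
  have hd_nonneg : ∀ i, 0 ≤ d i := fun i =>
    (hd i).elim (fun h => h ▸ le_rfl) (fun h => h ▸ le_max_right _ _)
  have hw : ∑ j, max (θ (Fin.castLE hq.le j) - 1) 0 = ∑ i, d i :=
    (Fintype.sum_extend_zero e.injective w).symm
  rw [hΛΨ, hΨ_conj, trace_inv_conj_conj_diagonal_mul hVV
      (fun i => (add_pos_of_nonneg_of_pos (hd_nonneg i) one_pos).ne') hGV,
    trace_inv_conj_conj_diagonal_mul (c := 1) hVV (fun _ => one_ne_zero) hGV, hw,
    eq_sub_iff_add_eq, ← Finset.sum_add_distrib]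
  refine Finset.sum_congr rfl fun i _ => ?_
  rcases hd i with h | h
  · simp [h]
  · simp only [Pi.one_apply, div_one, h]
    linarith [sub_div_max_sub_one_add_one (θ i)]

/-- Trace of the profile objective at the optimal loading matrix:
`tr((Λ̂Λ̂ᵀ + Ψ)⁻¹ S) = tr(Ψ⁻¹ S) − ∑_{j≤q} max(θ_j − 1, 0)`. -/
theorem optimized_covariance_trace {p q : ℕ} (hq : q < p)
    (Ψ Ψh S : Matrix (Fin p) (Fin p) ℝ)
    (hΨ : Ψ.PosDef) (hΨdiag : Ψ.IsDiag)
    (hΨh : Ψh.PosDef) (hΨhsq : Ψh * Ψh = Ψ)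
    (hS : S.IsSymm)
    (G : Matrix (Fin p) (Fin p) ℝ) (hG : G = Ψh⁻¹ * S * Ψh⁻¹)
    (V : Matrix (Fin p) (Fin p) ℝ) (hV : V ∈ Matrix.orthogonalGroup (Fin p) ℝ)
    (θ : Fin p → ℝ) (hθdec : Antitone θ)
    (hGeig : G = V * Matrix.diagonal θ * Vᵀ)
    (V₁ : Matrix (Fin p) (Fin q) ℝ)
    (hV₁ : V₁ = Matrix.of fun i j => V i (Fin.castLE hq.le j))
    (Δ : Matrix (Fin q) (Fin q) ℝ)
    (hΔ : Δ = Matrix.diagonal fun j => Real.sqrt (max (θ (Fin.castLE hq.le j) - 1) 0))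
    (Λhat : Matrix (Fin p) (Fin q) ℝ) (hΛhat : Λhat = Ψh * V₁ * Δ) :
    ((Λhat * Λhatᵀ + Ψ)⁻¹ * S).trace
      = (Ψ⁻¹ * S).trace - ∑ j : Fin q, max (θ (Fin.castLE hq.le j) - 1) 0 :=
  optimized_covariance_trace_general hq Ψ Ψh S hΨh hΨhsq G hG V hV θ hGeig V₁ hV₁ Δ hΔ Λhat hΛhat
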